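/- Let N ≥ 3 and s ∈ (0,1), and let 2*_s = 2N/(N−2s). Then there exist constants B₀ > 0 and σ > 0, depending only on N and s, and for every pair 0 < Λ₁ ≤ Λ₂ a constant C > 0, such that for all Λ ∈ [Λ₁, Λ₂] and all a, b ∈ ℝ^N with |a−b| ≥ 1, one has | ∫_{ℝ^N} U_{a,Λ}(y)^{2*_s−1} U_{b,Λ}(y) dy − B₀ / (Λ^{N−2s} |a−b|^{N−2s}) | ≤ C |a−b|^{−(N−2s+σ)}. -/

import Mathlib

/-!
Rescaling `z = Λ (y - a)` turns the integral into
`(4^s γ)^{N/2} ∫ ⟨z⟩^{-(N+2s)} ⟨z - v⟩^{-(N-2s)} dz`, with `v = Λ (b - a)` and the Japanese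
bracket `⟨z⟩ = √(1 + ‖z‖²)`, and `B₀ = (4^s γ)^{N/2} ∫ ⟨z⟩^{-(N+2s)}`.
On the ball `‖z‖ ≤ ‖v‖/2` the second factor is `‖v‖^{-(N-2s)}` up to a relative error
`O(‖v‖^{-2s} + (‖z‖/‖v‖)^s)`, and `‖z‖^s ⟨z⟩^{-(N+2s)}` is still integrable. Off that ball
`⟨z⟩^{-(N+2s)} ≤ (‖v‖/2)^{-s} ⟨z⟩^{-(N+s)}`, and near `v` the decay of the first factor is
transferred to `z - v`. So, for `‖v‖` bounded below, the error is bounded pointwise by a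
multiple of `‖v‖^{-(N-s)} (⟨z⟩^{-(N+s)} + ⟨z - v⟩^{-(N+s)})`, which integrates to
`O(‖v‖^{-(N-s)})`: this gives `σ = s`.
-/

open MeasureTheory

/-- The Aubin–Talenti bubble
`U_{x,Λ}(y) = (4^s γ)^{(N−2s)/4} (Λ/(1+Λ²|y−x|²))^{(N−2s)/2}`,
where `γ = Γ((N+2s)/2)/Γ((N−2s)/2)`. -/
noncomputable def bubble (N : ℕ) (s : ℝ) (x : EuclideanSpace ℝ (Fin N)) (Λ : ℝ)
    (y : EuclideanSpace ℝ (Fin N)) : ℝ :=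
  ((4 : ℝ) ^ s * (Real.Gamma (((N : ℝ) + 2 * s) / 2) / Real.Gamma (((N : ℝ) - 2 * s) / 2)))
      ^ (((N : ℝ) - 2 * s) / 4) *
    (Λ / (1 + Λ ^ 2 * ‖y - x‖ ^ 2)) ^ (((N : ℝ) - 2 * s) / 2)

/-- The normalizing constant `β(N,s)`, determined by
`∫_{ℝ^N} β(N,s) (|x|²+1)^{−(N+2s)/2} dx = 1`. -/
noncomputable def poissonConst (N : ℕ) (s : ℝ) : ℝ :=
  (∫ x : EuclideanSpace ℝ (Fin N), (‖x‖ ^ 2 + 1) ^ (-((N : ℝ) + 2 * s) / 2))⁻¹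

/-- The `s`-Poisson extension
`ũ(y,t) = β(N,s) ∫_{ℝ^N} t^{2s} (|y−ξ|²+t²)^{−(N+2s)/2} u(ξ) dξ`. -/
noncomputable def poissonExt (N : ℕ) (s : ℝ) (u : EuclideanSpace ℝ (Fin N) → ℝ)
    (y : EuclideanSpace ℝ (Fin N)) (t : ℝ) : ℝ :=
  poissonConst N s *
    ∫ ξ : EuclideanSpace ℝ (Fin N),
      t ^ (2 * s) * (‖y - ξ‖ ^ 2 + t ^ 2) ^ (-((N : ℝ) + 2 * s) / 2) * u ξ

open Real

lemma rpow_neg_sub_rpow_neg_le {q x y : ℝ} (hq : 0 < q) (hx : 1 ≤ x) (hxy : x ≤ y) :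
    x ^ (-q) - y ^ (-q) ≤ q * (y - x) := by
  have hderiv : ∀ t ∈ interior (Set.Ici (1 : ℝ)), -q ≤ deriv (fun t : ℝ => t ^ (-q)) t := by
    intro t ht
    rw [interior_Ici, Set.mem_Ioi] at ht
    rw [Real.deriv_rpow_const, neg_mul, neg_le_neg_iff]
    exact mul_le_of_le_one_right hq.le (rpow_le_one_of_one_le_of_nonpos ht.le (by linarith))
  have hcont : ContinuousOn (fun t : ℝ => t ^ (-q)) (Set.Ici 1) :=
    continuousOn_id.rpow_const fun t ht => Or.inl (by simp only [Set.mem_Ici] at ht; simp; linarith)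
  have hdiff : DifferentiableOn ℝ (fun t : ℝ => t ^ (-q)) (interior (Set.Ici 1)) := fun t ht =>
    (differentiableAt_id.rpow_const (Or.inl (by
      rw [interior_Ici, Set.mem_Ioi] at ht; simp; linarith))).differentiableWithinAt
  linarith [(convex_Ici (1 : ℝ)).mul_sub_le_image_sub_of_le_deriv hcont hdiff hderiv
    x hx y (hx.trans hxy) hxy]

lemma abs_rpow_neg_sub_rpow_neg_le {q σ c x y : ℝ} (hq : 0 < q) (hσ : 0 < σ) (hσ1 : σ ≤ 1)
    (hc : 0 < c) (hx : c ≤ x) (hy : c ≤ y) :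
    |x ^ (-q) - y ^ (-q)| ≤ max 1 q * c ^ (-q) * (|x - y| / c) ^ σ := by
  wlog hxy : x ≤ y generalizing x y
  · rw [abs_sub_comm, abs_sub_comm x]
    exact this hy hx (le_of_not_ge hxy)
  have hcq : 0 < c ^ (-q) := rpow_pos_of_pos hc _
  have hmono : y ^ (-q) ≤ x ^ (-q) := rpow_le_rpow_of_nonpos (hc.trans_le hx) hxy (by linarith)
  set t := |x - y| / c with ht_def
  have ht : t = y / c - x / c := by
    rw [ht_def, abs_sub_comm, abs_of_nonneg (by linarith), sub_div]
  rw [abs_of_nonneg (by linarith)]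
  rcases le_total 1 t with h1 | h1
  · calc x ^ (-q) - y ^ (-q) ≤ c ^ (-q) := by
          linarith [rpow_le_rpow_of_nonpos hc hx (by linarith : -q ≤ 0),
            rpow_nonneg (hc.le.trans hy) (-q)]
      _ ≤ max 1 q * c ^ (-q) * t ^ σ := by
          rw [mul_right_comm]
          exact le_mul_of_one_le_left hcq.le
            (one_le_mul_of_one_le_of_one_le (le_max_left _ _) (one_le_rpow h1 hσ.le))
  · have hlip := rpow_neg_sub_rpow_neg_le hq ((one_le_div hc).2 hx)
      (div_le_div_of_nonneg_right hxy hc.le)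
    rw [div_rpow (hc.le.trans hx) hc.le, div_rpow (hc.le.trans hy) hc.le, ← sub_div, ← ht,
      div_le_iff₀ hcq] at hlip
    calc x ^ (-q) - y ^ (-q) ≤ q * t * c ^ (-q) := hlip
      _ ≤ max 1 q * t ^ σ * c ^ (-q) := by
          gcongr
          · exact le_max_right _ _
          · exact self_le_rpow_of_le_one (by positivity) h1 hσ1
      _ = max 1 q * c ^ (-q) * t ^ σ := by ring

noncomputable def bracketWeight {E : Type*} [NormedAddCommGroup E] (β : ℝ) (z : E) : ℝ :=
  (1 + ‖z‖ ^ 2) ^ (-(β / 2))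

namespace bracketWeight

variable {E : Type*} [NormedAddCommGroup E]

lemma pos (β : ℝ) (z : E) : 0 < bracketWeight β z := by
  unfold bracketWeight; positivity

lemma nonneg (β : ℝ) (z : E) : 0 ≤ bracketWeight β z := (pos β z).le

@[fun_prop]
lemma continuous (β : ℝ) : Continuous (bracketWeight β : E → ℝ) :=
  (by fun_prop : Continuous fun z : E => 1 + ‖z‖ ^ 2).rpow_const fun _ => Or.inl (by positivity)

lemma mul (β γ : ℝ) (z : E) :
    bracketWeight β z * bracketWeight γ z = bracketWeight (β + γ) z := by
  unfold bracketWeight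
  rw [← rpow_add (by positivity)]
  ring_nf

lemma rpow (β t : ℝ) (z : E) : bracketWeight β z ^ t = bracketWeight (β * t) z := by
  unfold bracketWeight
  rw [← rpow_mul (by positivity)]
  ring_nf

lemma le_of_norm_le {γ : ℝ} (hγ : 0 ≤ γ) {z w : E} (h : ‖w‖ ≤ ‖z‖) :
    bracketWeight γ z ≤ bracketWeight γ w := by
  unfold bracketWeight
  exact rpow_le_rpow_of_nonpos (by positivity) (by gcongr) (by linarith)

lemma le_of_exponent_le {β γ : ℝ} (h : γ ≤ β) (z : E) :
    bracketWeight β z ≤ bracketWeight γ z :=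
  rpow_le_rpow_of_exponent_le (by nlinarith [norm_nonneg z]) (by linarith)

lemma le_one {γ : ℝ} (hγ : 0 ≤ γ) (z : E) : bracketWeight γ z ≤ 1 := by
  simpa [bracketWeight] using le_of_norm_le hγ (z := z) (w := (0 : E)) (by simp)

lemma le_rpow_neg {τ r : ℝ} (hτ : 0 ≤ τ) (hr : 0 < r) {z : E} (hz : r ≤ ‖z‖) :
    bracketWeight τ z ≤ r ^ (-τ) := by
  unfold bracketWeight
  calc (1 + ‖z‖ ^ 2) ^ (-(τ / 2)) ≤ (r ^ 2) ^ (-(τ / 2)) := by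
        apply rpow_le_rpow_of_nonpos (by positivity) _ (by linarith)
        nlinarith
    _ = r ^ (-τ) := by rw [← rpow_natCast, ← rpow_mul hr.le]; ring_nf

lemma le_rpow_neg_mul {β τ r : ℝ} (hτ : 0 ≤ τ) (hr : 0 < r) {z : E} (hz : r ≤ ‖z‖) :
    bracketWeight β z ≤ r ^ (-τ) * bracketWeight (β - τ) z := by
  rw [show bracketWeight β z = bracketWeight τ z * bracketWeight (β - τ) z by
    rw [mul, add_sub_cancel]]
  exact mul_le_mul_of_nonneg_right (le_rpow_neg hτ hr hz) (nonneg _ _)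

lemma norm_rpow_mul_le {β τ : ℝ} (hτ : 0 ≤ τ) (z : E) :
    ‖z‖ ^ τ * bracketWeight β z ≤ bracketWeight (β - τ) z := by
  calc ‖z‖ ^ τ * bracketWeight β z ≤ (1 + ‖z‖ ^ 2) ^ (τ / 2) * bracketWeight β z := by
        refine mul_le_mul_of_nonneg_right ?_ (nonneg _ _)
        calc ‖z‖ ^ τ = (‖z‖ ^ 2) ^ (τ / 2) := by
              rw [← rpow_natCast, ← rpow_mul (norm_nonneg z)]; ring_nf
          _ ≤ (1 + ‖z‖ ^ 2) ^ (τ / 2) := by gcongr; linarith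
    _ = bracketWeight (β - τ) z := by
        rw [← neg_neg (τ / 2), ← neg_div, ← bracketWeight, mul, neg_add_eq_sub]

lemma smul_sub [NormedSpace ℝ E] (β Λ : ℝ) (y x : E) :
    bracketWeight β (Λ • (y - x)) = (1 + Λ ^ 2 * ‖y - x‖ ^ 2) ^ (-(β / 2)) := by
  rw [bracketWeight, norm_smul, mul_pow, Real.norm_eq_abs, sq_abs]

lemma abs_shift_sub_rpow_neg_le {β σ r₀ : ℝ} (hβ : 0 < β) (hσ : 0 < σ) (hσ1 : σ ≤ 1)
    (hr₀ : 0 < r₀) {v z : E} (hv : r₀ ≤ ‖v‖) (hz : ‖z‖ ≤ ‖v‖ / 2) :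
    |bracketWeight β (z - v) - ‖v‖ ^ (-β)| ≤
      max 1 (β / 2) * 2 ^ β * ((4 / r₀) ^ σ + 12 ^ σ * ‖z‖ ^ σ) * ‖v‖ ^ (-(β + σ)) := by
  set R := ‖v‖
  set r := ‖z‖
  have hR : 0 < R := hr₀.trans_le hv
  have hr : 0 ≤ r := norm_nonneg z
  have hlow : R - r ≤ ‖z - v‖ := by
    have := norm_sub_norm_le v z; rw [norm_sub_rev v z] at this; linarith
  have hup : ‖z - v‖ ≤ R + r := by have := norm_sub_le z v; linarith
  have hc : 0 < R ^ 2 / 4 := by positivity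
  have hcx : R ^ 2 / 4 ≤ 1 + ‖z - v‖ ^ 2 := by nlinarith
  have hcy : R ^ 2 / 4 ≤ R ^ 2 := by nlinarith
  have hdiff : |1 + ‖z - v‖ ^ 2 - R ^ 2| / (R ^ 2 / 4) ≤ (4 / r₀ + 12 * r) / R := by
    have habs : |1 + ‖z - v‖ ^ 2 - R ^ 2| ≤ 1 + 3 * r * R := by
      rw [abs_le]; constructor <;> nlinarith
    calc |1 + ‖z - v‖ ^ 2 - R ^ 2| / (R ^ 2 / 4) ≤ (1 + 3 * r * R) / (R ^ 2 / 4) := by gcongr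
      _ = (4 / R + 12 * r) / R := by field_simp; ring
      _ ≤ (4 / r₀ + 12 * r) / R := by gcongr
  have hpow : ((4 / r₀ + 12 * r) / R) ^ σ ≤ ((4 / r₀) ^ σ + 12 ^ σ * r ^ σ) * R ^ (-σ) := by
    rw [div_rpow (by positivity) hR.le, div_eq_mul_inv, ← rpow_neg hR.le,
      ← mul_rpow (by norm_num) hr]
    gcongr
    exact rpow_add_le_add_rpow (by positivity) (by positivity) hσ.le hσ1
  have hc_pow : (R ^ 2 / 4) ^ (-(β / 2)) = 2 ^ β * R ^ (-β) := by
    rw [show R ^ 2 / 4 = (R / 2) ^ 2 by ring, ← rpow_natCast, ← rpow_mul (by positivity),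
      div_rpow hR.le (by norm_num)]
    push_cast
    rw [show (2 : ℝ) * -(β / 2) = -β by ring, rpow_neg hR.le, rpow_neg (by norm_num : (0 : ℝ) ≤ 2)]
    field_simp
  have hR_pow : R ^ (-β) = (R ^ 2) ^ (-(β / 2)) := by
    rw [← rpow_natCast, ← rpow_mul hR.le]; push_cast; ring_nf
  calc |bracketWeight β (z - v) - R ^ (-β)|
      ≤ max 1 (β / 2) * (R ^ 2 / 4) ^ (-(β / 2)) *
          (|1 + ‖z - v‖ ^ 2 - R ^ 2| / (R ^ 2 / 4)) ^ σ := by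
        rw [hR_pow]
        exact abs_rpow_neg_sub_rpow_neg_le (by positivity) hσ hσ1 hc hcx hcy
    _ ≤ max 1 (β / 2) * (2 ^ β * R ^ (-β)) * (((4 / r₀) ^ σ + 12 ^ σ * r ^ σ) * R ^ (-σ)) := by
        rw [hc_pow]
        gcongr
        exact (rpow_le_rpow (by positivity) hdiff hσ.le).trans hpow
    _ = max 1 (β / 2) * 2 ^ β * ((4 / r₀) ^ σ + 12 ^ σ * r ^ σ) * R ^ (-(β + σ)) := by
        rw [neg_add, rpow_add hR]; ring

lemma mul_shift_le_of_half_le {α β σ : ℝ} (hβ : 0 ≤ β) (hσ : 0 ≤ σ) (hαβσ : β + σ ≤ α)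
    {v z : E} (hv : 0 < ‖v‖) (hz : ‖v‖ / 2 ≤ ‖z‖) :
    bracketWeight α z * bracketWeight β (z - v) ≤
      (‖v‖ / 2) ^ (-(β + σ)) * (bracketWeight (α - σ) z + bracketWeight (α - σ) (z - v)) := by
  have hr : 0 < ‖v‖ / 2 := by positivity
  rcases le_total (‖v‖ / 2) ‖z - v‖ with hzv | hzv
  · calc bracketWeight α z * bracketWeight β (z - v)
        ≤ (‖v‖ / 2) ^ (-σ) * bracketWeight (α - σ) z * (‖v‖ / 2) ^ (-β) :=
          mul_le_mul (le_rpow_neg_mul hσ hr hz) (le_rpow_neg hβ hr hzv) (nonneg _ _)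
            (mul_nonneg (by positivity) (nonneg _ _))
      _ = (‖v‖ / 2) ^ (-(β + σ)) * bracketWeight (α - σ) z := by
          rw [neg_add, rpow_add hr]; ring
      _ ≤ _ := by gcongr; exact le_add_of_nonneg_right (nonneg _ _)
  · calc bracketWeight α z * bracketWeight β (z - v)
        ≤ (‖v‖ / 2) ^ (-(β + σ)) * bracketWeight (α - (β + σ)) (z - v) *
            bracketWeight β (z - v) := by
          -- the decay `α - (β + σ)` left over at `z` also holds at `z - v`, as `‖z - v‖ ≤ ‖z‖`
          refine mul_le_mul_of_nonneg_right
            ((le_rpow_neg_mul (τ := β + σ) (by positivity) hr hz).trans ?_) (nonneg _ _)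
          exact mul_le_mul_of_nonneg_left (le_of_norm_le (by linarith) (hzv.trans hz))
            (by positivity)
      _ = (‖v‖ / 2) ^ (-(β + σ)) * bracketWeight (α - σ) (z - v) := by
          rw [mul_assoc, mul]; ring_nf
      _ ≤ _ := by gcongr; exact le_add_of_nonneg_left (nonneg _ _)

lemma abs_mul_shift_sub_rpow_neg_le {α β σ r₀ : ℝ} (hβ : 0 < β) (hσ : 0 < σ) (hσ1 : σ ≤ 1)
    (hαβσ : β + σ ≤ α) (hr₀ : 0 < r₀) :
    ∃ K > 0, ∀ v z : E, r₀ ≤ ‖v‖ →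
      |bracketWeight α z * (bracketWeight β (z - v) - ‖v‖ ^ (-β))| ≤
        K * ‖v‖ ^ (-(β + σ)) * (bracketWeight (α - σ) z + bracketWeight (α - σ) (z - v)) := by
  set M := max 1 (β / 2) * 2 ^ β * ((4 / r₀) ^ σ + 12 ^ σ)
  refine ⟨M + 2 ^ (β + σ) + 2 ^ σ, by positivity, fun v z hv => ?_⟩
  set R := ‖v‖
  have hR : 0 < R := hr₀.trans_le hv
  have hF := nonneg (α - σ) z
  have hF' := nonneg (α - σ) (z - v)
  have hRpow : 0 ≤ R ^ (-(β + σ)) := by positivity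
  have hhalf : ∀ τ : ℝ, (R / 2) ^ (-τ) = 2 ^ τ * R ^ (-τ) := fun τ => by
    rw [div_rpow hR.le (by norm_num), rpow_neg (by norm_num : (0 : ℝ) ≤ 2)]; field_simp
  rw [abs_mul, abs_of_nonneg (nonneg α z)]
  rcases le_total ‖z‖ (R / 2) with hz | hz
  · have hweight : bracketWeight α z * ((4 / r₀) ^ σ + 12 ^ σ * ‖z‖ ^ σ) ≤
        ((4 / r₀) ^ σ + 12 ^ σ) * bracketWeight (α - σ) z := by
      have := norm_rpow_mul_le (β := α) hσ.le z
      have := le_of_exponent_le (by linarith : α - σ ≤ α) z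
      have : (0 : ℝ) ≤ (4 / r₀) ^ σ := by positivity
      have : (0 : ℝ) ≤ 12 ^ σ := by positivity
      nlinarith
    calc bracketWeight α z * |bracketWeight β (z - v) - R ^ (-β)|
        ≤ bracketWeight α z *
            (max 1 (β / 2) * 2 ^ β * ((4 / r₀) ^ σ + 12 ^ σ * ‖z‖ ^ σ) * R ^ (-(β + σ))) :=
          mul_le_mul_of_nonneg_left (abs_shift_sub_rpow_neg_le hβ hσ hσ1 hr₀ hv hz) (nonneg _ _)
      _ = max 1 (β / 2) * 2 ^ β * R ^ (-(β + σ)) *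
            (bracketWeight α z * ((4 / r₀) ^ σ + 12 ^ σ * ‖z‖ ^ σ)) := by ring
      _ ≤ max 1 (β / 2) * 2 ^ β * R ^ (-(β + σ)) *
            (((4 / r₀) ^ σ + 12 ^ σ) * bracketWeight (α - σ) z) := by gcongr
      _ = M * R ^ (-(β + σ)) * bracketWeight (α - σ) z := by ring
      _ ≤ _ := by gcongr <;> linarith [rpow_pos_of_pos two_pos (β + σ), rpow_pos_of_pos two_pos σ]
  · have hfar : bracketWeight α z * bracketWeight β (z - v) ≤ 2 ^ (β + σ) * R ^ (-(β + σ)) *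
        (bracketWeight (α - σ) z + bracketWeight (α - σ) (z - v)) := by
      rw [← hhalf]; exact mul_shift_le_of_half_le hβ.le hσ.le hαβσ hR hz
    have htail : bracketWeight α z ≤ 2 ^ σ * R ^ (-σ) * bracketWeight (α - σ) z := by
      rw [← hhalf]; exact le_rpow_neg_mul hσ.le (by positivity) hz
    have hM : 0 ≤ M := by positivity
    calc bracketWeight α z * |bracketWeight β (z - v) - R ^ (-β)|
        ≤ bracketWeight α z * bracketWeight β (z - v) + bracketWeight α z * R ^ (-β) := by
          rw [← mul_add]
          gcongr
          · exact nonneg _ _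
          · exact (abs_sub _ _).trans (by rw [abs_of_nonneg (nonneg _ _),
              abs_of_nonneg (by positivity)])
      _ ≤ 2 ^ (β + σ) * R ^ (-(β + σ)) * (bracketWeight (α - σ) z + bracketWeight (α - σ) (z - v))
          + 2 ^ σ * R ^ (-σ) * bracketWeight (α - σ) z * R ^ (-β) := by
          gcongr
      _ = 2 ^ (β + σ) * R ^ (-(β + σ)) * (bracketWeight (α - σ) z + bracketWeight (α - σ) (z - v))
          + 2 ^ σ * R ^ (-(β + σ)) * bracketWeight (α - σ) z := by
          rw [neg_add, rpow_add hR]; ring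
      _ ≤ _ := by nlinarith [mul_nonneg hM (mul_nonneg hRpow (add_nonneg hF hF')),
            mul_nonneg (rpow_nonneg zero_le_two σ) (mul_nonneg hRpow hF')]

section Integral

open Module

variable [NormedSpace ℝ E] [FiniteDimensional ℝ E] [MeasurableSpace E] [BorelSpace E]
  (μ : Measure E) [μ.IsAddHaarMeasure]

lemma integrable {β : ℝ} (hβ : finrank ℝ E < β) : Integrable (bracketWeight β) μ := by
  have := integrable_rpow_neg_one_add_norm_sq (μ := μ) hβ
  simp only [neg_div] at this
  exact this

lemma integral_pos {β : ℝ} (hβ : finrank ℝ E < β) : 0 < ∫ z, bracketWeight β z ∂μ := by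
  rw [integral_pos_iff_support_of_nonneg (nonneg β) (integrable μ hβ),
    Function.support_eq_univ fun z => (pos β z).ne']
  exact isOpen_univ.measure_pos μ Set.univ_nonempty

theorem abs_integral_mul_shift_sub_le {α β σ r₀ : ℝ} (hβ : 0 < β) (hσ : 0 < σ) (hσ1 : σ ≤ 1)
    (hαβσ : β + σ ≤ α) (hασ : finrank ℝ E < α - σ) (hr₀ : 0 < r₀) :
    ∃ C > 0, ∀ v : E, r₀ ≤ ‖v‖ →
      |(∫ z, bracketWeight α z * bracketWeight β (z - v) ∂μ) -
          (∫ z, bracketWeight α z ∂μ) * ‖v‖ ^ (-β)| ≤ C * ‖v‖ ^ (-(β + σ)) := by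
  obtain ⟨K, hK, hpoint⟩ := abs_mul_shift_sub_rpow_neg_le (E := E) hβ hσ hσ1 hαβσ hr₀
  have hA := integrable μ (hασ.trans_le (by linarith : α - σ ≤ α))
  have hB := integrable μ hασ
  refine ⟨K * (2 * ∫ z, bracketWeight (α - σ) z ∂μ), by positivity [integral_pos μ hασ],
    fun v hv => ?_⟩
  have hprod : Integrable (fun z => bracketWeight α z * bracketWeight β (z - v)) μ := by
    refine hA.mono' (by fun_prop) (ae_of_all _ fun z => ?_)
    rw [Real.norm_eq_abs, abs_of_nonneg (mul_nonneg (nonneg _ _) (nonneg _ _))]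
    exact mul_le_of_le_one_right (nonneg _ _) (le_one hβ.le _)
  have hdom := (hB.add (hB.comp_sub_right v)).const_mul (K * ‖v‖ ^ (-(β + σ)))
  calc |(∫ z, bracketWeight α z * bracketWeight β (z - v) ∂μ) -
          (∫ z, bracketWeight α z ∂μ) * ‖v‖ ^ (-β)|
      = ‖∫ z, bracketWeight α z * (bracketWeight β (z - v) - ‖v‖ ^ (-β)) ∂μ‖ := by
        simp_rw [mul_sub]
        rw [integral_sub hprod (hA.mul_const _), integral_mul_const, Real.norm_eq_abs]
    _ ≤ ∫ z, K * ‖v‖ ^ (-(β + σ)) *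
          (bracketWeight (α - σ) z + bracketWeight (α - σ) (z - v)) ∂μ :=
        norm_integral_le_of_norm_le hdom (ae_of_all _ fun z => hpoint v z hv)
    _ = K * (2 * ∫ z, bracketWeight (α - σ) z ∂μ) * ‖v‖ ^ (-(β + σ)) := by
        rw [integral_const_mul, integral_add hB (hB.comp_sub_right v),
          integral_sub_right_eq_self]
        ring

end Integral

end bracketWeight

noncomputable def bubbleConst (N : ℕ) (s : ℝ) : ℝ :=
  4 ^ s * (Real.Gamma (((N : ℝ) + 2 * s) / 2) / Real.Gamma (((N : ℝ) - 2 * s) / 2))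

section Bubble

variable {N : ℕ} {s : ℝ}

lemma bubbleConst_pos (hs : 0 ≤ s) (hsN : 2 * s < N) : 0 < bubbleConst N s :=
  mul_pos (by positivity)
    (div_pos (Gamma_pos_of_pos (by linarith)) (Gamma_pos_of_pos (by linarith)))

lemma bubble_eq {Λ : ℝ} (hΛ : 0 < Λ) (x y : EuclideanSpace ℝ (Fin N)) :
    bubble N s x Λ y = bubbleConst N s ^ (((N : ℝ) - 2 * s) / 4) *
      (Λ ^ (((N : ℝ) - 2 * s) / 2) * bracketWeight ((N : ℝ) - 2 * s) (Λ • (y - x))) := by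
  rw [bubble, bubbleConst, bracketWeight.smul_sub, div_rpow hΛ.le (by positivity),
    rpow_neg (by positivity)]
  ring

lemma bubble_rpow_mul_bubble (hs : 0 ≤ s) (hsN : 2 * s < N) {Λ : ℝ} (hΛ : 0 < Λ)
    (a b y : EuclideanSpace ℝ (Fin N)) :
    bubble N s a Λ y ^ (2 * (N : ℝ) / ((N : ℝ) - 2 * s) - 1) * bubble N s b Λ y =
      bubbleConst N s ^ ((N : ℝ) / 2) * Λ ^ (N : ℝ) *
        (bracketWeight ((N : ℝ) + 2 * s) (Λ • (y - a)) *
          bracketWeight ((N : ℝ) - 2 * s) (Λ • (y - b))) := by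
  have hκ := bubbleConst_pos hs hsN
  have hν : (N : ℝ) - 2 * s ≠ 0 := by linarith
  have e1 : ((N : ℝ) - 2 * s) * (2 * (N : ℝ) / ((N : ℝ) - 2 * s) - 1) = (N : ℝ) + 2 * s := by
    field_simp; ring
  have e2 : ((N : ℝ) - 2 * s) / 2 * (2 * (N : ℝ) / ((N : ℝ) - 2 * s) - 1) =
      ((N : ℝ) + 2 * s) / 2 := by rw [div_mul_eq_mul_div, e1]
  have e4 : ((N : ℝ) - 2 * s) / 4 * (2 * (N : ℝ) / ((N : ℝ) - 2 * s) - 1) =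
      ((N : ℝ) + 2 * s) / 4 := by rw [div_mul_eq_mul_div, e1]
  rw [bubble_eq hΛ, bubble_eq hΛ, mul_rpow (by positivity)
      (mul_nonneg (by positivity) (bracketWeight.nonneg _ _)),
    mul_rpow (by positivity) (bracketWeight.nonneg _ _), ← rpow_mul hκ.le, ← rpow_mul hΛ.le,
    bracketWeight.rpow, e1, e2, e4]
  have hκ_pow : bubbleConst N s ^ (((N : ℝ) + 2 * s) / 4) *
      bubbleConst N s ^ (((N : ℝ) - 2 * s) / 4) = bubbleConst N s ^ ((N : ℝ) / 2) := by
    rw [← rpow_add hκ]; ring_nf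
  have hΛ_pow : Λ ^ (((N : ℝ) + 2 * s) / 2) * Λ ^ (((N : ℝ) - 2 * s) / 2) =
      Λ ^ (N : ℝ) := by
    rw [← rpow_add hΛ]; ring_nf
  rw [← hκ_pow, ← hΛ_pow]
  ring

lemma integral_bubble_rpow_mul_bubble (hs : 0 ≤ s) (hsN : 2 * s < N) {Λ : ℝ} (hΛ : 0 < Λ)
    (a b : EuclideanSpace ℝ (Fin N)) :
    ∫ y, bubble N s a Λ y ^ (2 * (N : ℝ) / ((N : ℝ) - 2 * s) - 1) * bubble N s b Λ y =
      bubbleConst N s ^ ((N : ℝ) / 2) *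
        ∫ z, bracketWeight ((N : ℝ) + 2 * s) z *
          bracketWeight ((N : ℝ) - 2 * s) (z - Λ • (b - a)) := by
  set G := fun z : EuclideanSpace ℝ (Fin N) => bracketWeight ((N : ℝ) + 2 * s) z *
    bracketWeight ((N : ℝ) - 2 * s) (z - Λ • (b - a))
  have hshift : ∀ y, Λ • (y - b) = Λ • (y - a) - Λ • (b - a) := fun y => by
    rw [← smul_sub, sub_sub_sub_cancel_right]
  simp_rw [bubble_rpow_mul_bubble hs hsN hΛ, hshift]
  rw [integral_const_mul, integral_sub_right_eq_self (fun y => G (Λ • y)) a,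
    Measure.integral_comp_smul_of_nonneg volume G Λ (hR := hΛ.le), finrank_euclideanSpace_fin,
    smul_eq_mul, ← mul_assoc, mul_assoc _ (Λ ^ (N : ℝ)), rpow_natCast,
    mul_inv_cancel₀ (by positivity), mul_one]

lemma abs_integral_bubble_rpow_mul_bubble_sub (hs : 0 ≤ s) (hsN : 2 * s < N) {Λ : ℝ}
    (hΛ : 0 < Λ) (a b : EuclideanSpace ℝ (Fin N)) (A : ℝ) :
    |(∫ y, bubble N s a Λ y ^ (2 * (N : ℝ) / ((N : ℝ) - 2 * s) - 1) * bubble N s b Λ y) -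
        bubbleConst N s ^ ((N : ℝ) / 2) * A /
          (Λ ^ ((N : ℝ) - 2 * s) * ‖a - b‖ ^ ((N : ℝ) - 2 * s))| =
      bubbleConst N s ^ ((N : ℝ) / 2) *
        |(∫ z, bracketWeight ((N : ℝ) + 2 * s) z *
            bracketWeight ((N : ℝ) - 2 * s) (z - Λ • (b - a))) -
          A * ‖Λ • (b - a)‖ ^ (-((N : ℝ) - 2 * s))| := by
  have hv : ‖Λ • (b - a)‖ = Λ * ‖a - b‖ := by rw [norm_smul_of_nonneg hΛ.le, norm_sub_rev]
  rw [integral_bubble_rpow_mul_bubble hs hsN hΛ, hv, mul_rpow hΛ.le (norm_nonneg _),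
    rpow_neg hΛ.le, rpow_neg (norm_nonneg _), ← mul_inv, ← div_eq_mul_inv, mul_div_assoc,
    ← mul_sub, abs_mul, abs_of_pos (rpow_pos_of_pos (bubbleConst_pos hs hsN) _)]

end Bubble

/-- For `N ≥ 3` and `s ∈ (0,1)` there exist `B₀ > 0`, `σ > 0`
(depending only on `N`, `s`) such that for each `0 < Λ₁ ≤ Λ₂` there is `C > 0` with
`|∫ U_{a,Λ}^{2*_s−1} U_{b,Λ} − B₀/(Λ^{N−2s}|a−b|^{N−2s})| ≤ C |a−b|^{−(N−2s+σ)}`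
for all `Λ ∈ [Λ₁,Λ₂]` and `|a−b| ≥ 1`. -/
theorem stmt_15 (N : ℕ) (hN : 3 ≤ N) (s : ℝ) (hs : s ∈ Set.Ioo (0 : ℝ) 1) :
    ∃ B₀ > 0, ∃ σ > 0, ∀ Λ₁ Λ₂ : ℝ, 0 < Λ₁ → Λ₁ ≤ Λ₂ → ∃ C > 0,
      ∀ Λ ∈ Set.Icc Λ₁ Λ₂, ∀ a b : EuclideanSpace ℝ (Fin N), 1 ≤ ‖a - b‖ →
        |(∫ y : EuclideanSpace ℝ (Fin N),
            bubble N s a Λ y ^ (2 * (N : ℝ) / ((N : ℝ) - 2 * s) - 1) * bubble N s b Λ y) -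
          B₀ / (Λ ^ ((N : ℝ) - 2 * s) * ‖a - b‖ ^ ((N : ℝ) - 2 * s))| ≤
          C * ‖a - b‖ ^ (-((N : ℝ) - 2 * s + σ)) := by
  obtain ⟨hs0, hs1⟩ := hs
  have hN' : (3 : ℝ) ≤ N := by exact_mod_cast hN
  have hsN : 2 * s < N := by linarith
  have hdim : (Module.finrank ℝ (EuclideanSpace ℝ (Fin N)) : ℝ) < (N : ℝ) + 2 * s - s := by
    rw [finrank_euclideanSpace_fin]; linarith
  set κ := bubbleConst N s ^ ((N : ℝ) / 2)
  set A := ∫ z : EuclideanSpace ℝ (Fin N), bracketWeight ((N : ℝ) + 2 * s) z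
  have hκ : 0 < κ := rpow_pos_of_pos (bubbleConst_pos hs0.le hsN) _
  refine ⟨κ * A, mul_pos hκ (bracketWeight.integral_pos _ (hdim.trans (by linarith))), s, hs0,
    fun Λ₁ Λ₂ hΛ₁ _ => ?_⟩
  obtain ⟨C₀, hC₀, hcore⟩ := bracketWeight.abs_integral_mul_shift_sub_le volume
    (β := (N : ℝ) - 2 * s) (by linarith) hs0 hs1.le (by linarith) hdim hΛ₁
  refine ⟨κ * C₀ * Λ₁ ^ (-((N : ℝ) - 2 * s + s)), by positivity, fun Λ hΛ a b hab => ?_⟩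
  have hΛ0 : 0 < Λ := hΛ₁.trans_le hΛ.1
  have hv : ‖Λ • (b - a)‖ = Λ * ‖a - b‖ := by rw [norm_smul_of_nonneg hΛ0.le, norm_sub_rev]
  rw [abs_integral_bubble_rpow_mul_bubble_sub hs0.le hsN hΛ0]
  calc _ ≤ κ * (C₀ * ‖Λ • (b - a)‖ ^ (-((N : ℝ) - 2 * s + s))) :=
        mul_le_mul_of_nonneg_left (hcore _ (by rw [hv]; nlinarith [hΛ.1])) hκ.le
    _ = κ * C₀ * Λ ^ (-((N : ℝ) - 2 * s + s)) * ‖a - b‖ ^ (-((N : ℝ) - 2 * s + s)) := by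
        rw [hv, mul_rpow hΛ0.le (norm_nonneg _)]; ring
    _ ≤ _ := by
        have := rpow_le_rpow_of_nonpos hΛ₁ hΛ.1 (by linarith : -((N : ℝ) - 2 * s + s) ≤ 0)
        gcongr
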